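/- Let s be a nonzero complex number with s⁸ + s⁴ + 1 ≠ 0, and set c = s² + s⁻². If complex numbers a₁, a₂ satisfy both (E1) s⁴ + s⁻⁴ = (a₁/4)(c + 1) + a₂(c − 1) and (E2) s·(s⁴ + s⁻⁴) + s⁻¹·(s² + s⁻²) = (a₂ − a₁/4)(s³ + s⁻³) + (a₁/2)·s³, then necessarily a₁ = 2(c − 2) and a₂ = (c + 2)/2. -/

import Mathlib

/-!
(E1) and (E2) are a linear system in `(a₁, a₂)`. The claimed values solve it, and its
determinant is `(s³ + c s⁻³) / 2 = (s⁸ + s⁴ + 1) / (2 s⁵)`, which is nonzero, so they are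
the only solution.
-/

theorem eq_and_eq_of_linear_system {K : Type*} [Field K] {p q r t x y x₀ y₀ : K}
    (hdet : p * t - q * r ≠ 0)
    (h₁ : p * x + q * y = p * x₀ + q * y₀) (h₂ : r * x + t * y = r * x₀ + t * y₀) :
    x = x₀ ∧ y = y₀ := by
  have hx : (x - x₀) * (p * t - q * r) = 0 := by linear_combination t * h₁ - q * h₂
  have hy : (y - y₀) * (p * t - q * r) = 0 := by linear_combination p * h₂ - r * h₁
  exact ⟨sub_eq_zero.1 ((mul_eq_zero.1 hx).resolve_right hdet),
    sub_eq_zero.1 ((mul_eq_zero.1 hy).resolve_right hdet)⟩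

section Resolution

variable {s c : ℂ}

theorem resolution_det_eq (hs : s ≠ 0) (hc : c = s ^ 2 + s⁻¹ ^ 2) :
    (c + 1) / 4 * (s ^ 3 + s⁻¹ ^ 3) - (c - 1) * (s ^ 3 / 2 - (s ^ 3 + s⁻¹ ^ 3) / 4) =
      (s ^ 8 + s ^ 4 + 1) / (2 * s ^ 5) := by
  subst hc
  field_simp
  ring

theorem expected_coeffs_solve_E1 (hs : s ≠ 0) (hc : c = s ^ 2 + s⁻¹ ^ 2) :
    s ^ 4 + s⁻¹ ^ 4 = 2 * (c - 2) / 4 * (c + 1) + (c + 2) / 2 * (c - 1) := by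
  subst hc
  field_simp
  ring

theorem expected_coeffs_solve_E2 (hs : s ≠ 0) (hc : c = s ^ 2 + s⁻¹ ^ 2) :
    s * (s ^ 4 + s⁻¹ ^ 4) + s⁻¹ * (s ^ 2 + s⁻¹ ^ 2) =
      ((c + 2) / 2 - 2 * (c - 2) / 4) * (s ^ 3 + s⁻¹ ^ 3) + 2 * (c - 2) / 2 * s ^ 3 := by
  subst hc
  field_simp
  ring

end Resolution

/-- Proposition 3.1 (uniqueness part): if `s ≠ 0`, `s⁸ + s⁴ + 1 ≠ 0`, and
`c = s² + s⁻²`, then any solution `(a₁, a₂)` of equations (E1) and (E2)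
must be `a₁ = 2(c − 2)`, `a₂ = (c + 2)/2`. -/
theorem coefficients_unique (s : ℂ) (hs : s ≠ 0)
    (hs8 : s ^ 8 + s ^ 4 + 1 ≠ 0)
    (c a₁ a₂ : ℂ) (hc : c = s ^ 2 + s⁻¹ ^ 2)
    (hE1 : s ^ 4 + s⁻¹ ^ 4 = a₁ / 4 * (c + 1) + a₂ * (c - 1))
    (hE2 : s * (s ^ 4 + s⁻¹ ^ 4) + s⁻¹ * (s ^ 2 + s⁻¹ ^ 2) =
      (a₂ - a₁ / 4) * (s ^ 3 + s⁻¹ ^ 3) + a₁ / 2 * s ^ 3) :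
    a₁ = 2 * (c - 2) ∧ a₂ = (c + 2) / 2 := by
  have hdet :
      (c + 1) / 4 * (s ^ 3 + s⁻¹ ^ 3) - (c - 1) * (s ^ 3 / 2 - (s ^ 3 + s⁻¹ ^ 3) / 4) ≠ 0 := by
    rw [resolution_det_eq hs hc]
    exact div_ne_zero hs8 (mul_ne_zero two_ne_zero (pow_ne_zero _ hs))
  refine eq_and_eq_of_linear_system hdet ?_ ?_
  · linear_combination expected_coeffs_solve_E1 hs hc - hE1
  · linear_combination expected_coeffs_solve_E2 hs hc - hE2
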